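/- Cauchy product form of Bailey's first identity: for ρ ∈ ℂ not a nonpositive integer and every nonnegative integer N, ∑_{m+n=N} (−1)^n / ((ρ)_m (ρ)_n m! n!) = 0 if N is odd, and for N = 2k: ∑_{m=0}^{2k} (−1)^m / ((ρ)_m (ρ)_{2k−m} m! (2k−m)!) = (−1)^k / (4^k (ρ)_k (ρ/2)_k ((ρ+1)/2)_k k!). -/
import Mathlib


noncomputable def poch (a : ℂ) (n : ℕ) : ℂ := (ascPochhammer ℂ n).eval a

lemma poch_zero (a : ℂ) : poch a 0 = 1 := by simp [poch]

lemma poch_succ (a : ℂ) (n : ℕ) : poch a (n + 1) = poch a n * (a + n) := by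
  simp [poch, ascPochhammer_succ_right]

lemma poch_ne_zero {a : ℂ} (h : ∀ k : ℕ, a ≠ -(k : ℂ)) (n : ℕ) : poch a n ≠ 0 := by
  induction n with
  | zero => simp [poch_zero]
  | succ n ih =>
    rw [poch_succ]
    refine mul_ne_zero ih fun h0 => h n ?_
    linear_combination h0

noncomputable def aa (ρ : ℂ) (n : ℕ) : ℂ := 1 / (poch ρ n * n.factorial)
noncomputable def bb (ρ : ℂ) (n : ℕ) : ℂ := (-1) ^ n / (poch ρ n * n.factorial)

noncomputable def cc (ρ : ℂ) (N : ℕ) : ℂ :=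
  ∑ m ∈ Finset.range (N + 1), bb ρ m * aa ρ (N - m)

noncomputable def dd (ρ : ℂ) (N : ℕ) : ℂ :=
  ∑ m ∈ Finset.range (N + 1),
    ((m : ℂ) + 1) * bb ρ (m + 1) * (((N - m : ℕ) : ℂ) + 1) * aa ρ (N - m + 1)

noncomputable def ww (ρ : ℂ) (N : ℕ) : ℂ :=
  ∑ m ∈ Finset.range (N + 1),
    (((m : ℂ) + 1) * bb ρ (m + 1) * aa ρ (N - m)
      - bb ρ m * (((N - m : ℕ) : ℂ) + 1) * aa ρ (N - m + 1))

section
variable {ρ : ℂ} (hρ : ∀ k : ℕ, ρ ≠ -(k : ℂ))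
include hρ

lemma aa_rec (n : ℕ) : ((n : ℂ) + 1) * (ρ + n) * aa ρ (n + 1) = aa ρ n := by
  have h1 : poch ρ n ≠ 0 := poch_ne_zero hρ n
  have h2 : ρ + n ≠ 0 := fun h0 => hρ n (by linear_combination h0)
  have h3 : ((n.factorial : ℂ)) ≠ 0 := Nat.cast_ne_zero.2 n.factorial_ne_zero
  rw [aa, aa, poch_succ, Nat.factorial_succ]
  push_cast
  have hn1 : ((n : ℂ) + 1) ≠ 0 := Nat.cast_add_one_ne_zero n
  rw [mul_one_div, div_eq_div_iff (by exact mul_ne_zero (mul_ne_zero h1 h2) (mul_ne_zero hn1 h3)) (mul_ne_zero h1 h3)]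
  ring

lemma bb_rec (n : ℕ) : ((n : ℂ) + 1) * (ρ + n) * bb ρ (n + 1) = -bb ρ n := by
  have h1 : poch ρ n ≠ 0 := poch_ne_zero hρ n
  have h2 : ρ + n ≠ 0 := fun h0 => hρ n (by linear_combination h0)
  have h3 : ((n.factorial : ℂ)) ≠ 0 := Nat.cast_ne_zero.2 n.factorial_ne_zero
  rw [bb, bb, poch_succ, Nat.factorial_succ, pow_succ]
  push_cast
  have hn1 : ((n : ℂ) + 1) ≠ 0 := Nat.cast_add_one_ne_zero n
  rw [mul_div_assoc', neg_div' (poch ρ n * ↑n.factorial) ((-1)^n : ℂ),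
    div_eq_div_iff (mul_ne_zero (mul_ne_zero h1 h2) (mul_ne_zero hn1 h3)) (mul_ne_zero h1 h3)]
  ring

end

section
variable {ρ : ℂ} (hρ : ∀ k : ℕ, ρ ≠ -(k : ℂ))
include hρ

lemma dd_rel (n : ℕ) : ((n : ℂ) + 2 * ρ) * dd ρ n = ww ρ n := by
  rw [dd, ww, Finset.mul_sum]
  refine Finset.sum_congr rfl fun m hm => ?_
  have hmn : m ≤ n := Nat.lt_succ_iff.1 (Finset.mem_range.1 hm)
  have hb := bb_rec hρ m
  have ha := aa_rec hρ (n - m)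
  have hj : ((n - m : ℕ) : ℂ) = (n : ℂ) - m := by
    push_cast [Nat.cast_sub hmn]; ring
  rw [hj] at ha ⊢
  linear_combination (((n : ℂ) - m) + 1) * aa ρ (n - m + 1) * hb +
    ((m : ℂ) + 1) * bb ρ (m + 1) * ha

lemma ww_rel (n : ℕ) : ((n : ℂ) + ρ) * ww ρ n = -2 * cc ρ n := by
  have key : ∀ m ∈ Finset.range (n + 1),
      ((n : ℂ) + ρ) * (((m : ℂ) + 1) * bb ρ (m + 1) * aa ρ (n - m)
        - bb ρ m * (((n - m : ℕ) : ℂ) + 1) * aa ρ (n - m + 1))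
      = -2 * (bb ρ m * aa ρ (n - m)) +
        (((m + 1 : ℕ) : ℂ) * bb ρ (m + 1) * ((n + 1 - (m + 1) : ℕ) : ℂ) * aa ρ (n + 1 - (m + 1))
          - ((m : ℕ) : ℂ) * bb ρ m * ((n + 1 - m : ℕ) : ℂ) * aa ρ (n + 1 - m)) := by
    intro m hm
    have hmn : m ≤ n := Nat.lt_succ_iff.1 (Finset.mem_range.1 hm)
    have hb := bb_rec hρ m
    have ha := aa_rec hρ (n - m)
    have e1 : n + 1 - (m + 1) = n - m := by omega
    have e2 : n + 1 - m = n - m + 1 := by omega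
    rw [e1, e2]
    have hj : ((n - m : ℕ) : ℂ) = (n : ℂ) - m := by push_cast [Nat.cast_sub hmn]; ring
    rw [hj] at ha
    push_cast [Nat.cast_sub hmn]
    linear_combination aa ρ (n - m) * hb - bb ρ m * ha
  rw [ww, cc, Finset.mul_sum, Finset.sum_congr rfl key, Finset.sum_add_distrib,
    Finset.sum_range_sub (fun m => ((m : ℕ) : ℂ) * bb ρ m * ((n + 1 - m : ℕ) : ℂ) * aa ρ (n + 1 - m)),
    ← Finset.mul_sum]
  simp

lemma cc_rel (n : ℕ) : ((n : ℂ) + 2) * ((n : ℂ) + 1 + ρ) * cc ρ (n + 2) = 2 * dd ρ n := by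
  have hP1 : ∑ m ∈ Finset.range (n + 3),
      (m : ℂ) * ((m : ℂ) - 1 + ρ) * (bb ρ m * aa ρ (n + 2 - m)) = -cc ρ (n + 1) := by
    rw [Finset.sum_range_succ']
    simp only [Nat.cast_zero, zero_mul, add_zero]
    rw [cc, ← Finset.sum_neg_distrib]
    refine Finset.sum_congr rfl fun i hi => ?_
    have e1 : n + 2 - (i + 1) = n + 1 - i := by omega
    have hb := bb_rec hρ i
    rw [e1]
    push_cast
    linear_combination aa ρ (n + 1 - i) * hb
  have hP2 : ∑ m ∈ Finset.range (n + 3),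
      ((n + 2 - m : ℕ) : ℂ) * (((n + 2 - m : ℕ) : ℂ) - 1 + ρ) * (bb ρ m * aa ρ (n + 2 - m))
      = cc ρ (n + 1) := by
    rw [Finset.sum_range_succ]
    simp only [Nat.sub_self, Nat.cast_zero, zero_mul, add_zero]
    rw [cc]
    refine Finset.sum_congr rfl fun m hm => ?_
    have hmn : m ≤ n + 1 := Nat.lt_succ_iff.1 (Finset.mem_range.1 hm)
    have e1 : n + 2 - m = (n + 1 - m) + 1 := by omega
    have ha := aa_rec hρ (n + 1 - m)
    rw [e1]
    push_cast
    linear_combination bb ρ m * ha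
  have hQ : ∑ m ∈ Finset.range (n + 3),
      2 * (m : ℂ) * ((n + 2 - m : ℕ) : ℂ) * (bb ρ m * aa ρ (n + 2 - m)) = 2 * dd ρ n := by
    rw [Finset.sum_range_succ', Finset.sum_range_succ]
    simp only [Nat.cast_zero, mul_zero, zero_mul, add_zero, Nat.sub_self]
    rw [dd, Finset.mul_sum]
    refine Finset.sum_congr rfl fun i hi => ?_
    have hin : i ≤ n := Nat.lt_succ_iff.1 (Finset.mem_range.1 hi)
    have e1 : n + 2 - (i + 1) = n - i + 1 := by omega
    rw [e1]
    push_cast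
    ring
  have expand : ∀ m ∈ Finset.range (n + 3),
      ((n : ℂ) + 2) * ((n : ℂ) + 1 + ρ) * (bb ρ m * aa ρ (n + 2 - m))
      = (m : ℂ) * ((m : ℂ) - 1 + ρ) * (bb ρ m * aa ρ (n + 2 - m))
        + ((n + 2 - m : ℕ) : ℂ) * (((n + 2 - m : ℕ) : ℂ) - 1 + ρ) * (bb ρ m * aa ρ (n + 2 - m))
        + 2 * (m : ℂ) * ((n + 2 - m : ℕ) : ℂ) * (bb ρ m * aa ρ (n + 2 - m)) := by
    intro m hm
    have hmn : m ≤ n + 2 := Nat.lt_succ_iff.1 (Finset.mem_range.1 hm)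
    have hj : ((n + 2 - m : ℕ) : ℂ) = (n : ℂ) + 2 - m := by push_cast [Nat.cast_sub hmn]; ring
    rw [hj]; ring
  rw [cc, Finset.mul_sum, Finset.sum_congr rfl expand, Finset.sum_add_distrib,
    Finset.sum_add_distrib, hP1, hP2, hQ]
  ring

end

noncomputable def RR (ρ : ℂ) (k : ℕ) : ℂ :=
  (-1) ^ k / ((4 : ℂ) ^ k * poch ρ k * poch (ρ / 2) k * poch ((ρ + 1) / 2) k * k.factorial)

section
variable {ρ : ℂ} (hρ : ∀ k : ℕ, ρ ≠ -(k : ℂ))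
    (hρ2 : ∀ k : ℕ, ρ / 2 ≠ -(k : ℂ)) (hρ3 : ∀ k : ℕ, (ρ + 1) / 2 ≠ -(k : ℂ))
include hρ hρ2 hρ3

lemma RR_succ (k : ℕ) :
    (4 * (ρ + k) * (ρ / 2 + k) * ((ρ + 1) / 2 + k) * ((k : ℂ) + 1)) * RR ρ (k + 1)
      = - RR ρ k := by
  have p1 : poch ρ k ≠ 0 := poch_ne_zero hρ k
  have p2 : poch (ρ / 2) k ≠ 0 := poch_ne_zero hρ2 k
  have p3 : poch ((ρ + 1) / 2) k ≠ 0 := poch_ne_zero hρ3 k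
  have q1 : ρ + (k : ℂ) ≠ 0 := fun h => hρ k (by linear_combination h)
  have q2 : ρ / 2 + (k : ℂ) ≠ 0 := fun h => hρ2 k (by linear_combination h)
  have q3 : (ρ + 1) / 2 + (k : ℂ) ≠ 0 := fun h => hρ3 k (by linear_combination h)
  have q5 : ((4 : ℂ)) ^ k ≠ 0 := pow_ne_zero k (by norm_num)
  have q6 : ((k.factorial : ℂ)) ≠ 0 := Nat.cast_ne_zero.2 k.factorial_ne_zero
  have q7 : ((((k + 1) * k.factorial : ℕ) : ℂ)) ≠ 0 :=
    Nat.cast_ne_zero.2 (Nat.mul_ne_zero (k.succ_ne_zero) k.factorial_ne_zero)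
  have hE : (4 : ℂ) ^ (k + 1) * (poch ρ k * (ρ + (k : ℂ))) * (poch (ρ / 2) k * (ρ / 2 + (k : ℂ)))
      * (poch ((ρ + 1) / 2) k * ((ρ + 1) / 2 + (k : ℂ))) * (((k + 1) * k.factorial : ℕ) : ℂ) ≠ 0 :=
    mul_ne_zero (mul_ne_zero (mul_ne_zero (mul_ne_zero (pow_ne_zero _ (by norm_num))
      (mul_ne_zero p1 q1)) (mul_ne_zero p2 q2)) (mul_ne_zero p3 q3)) q7
  have hF : (4 : ℂ) ^ k * poch ρ k * poch (ρ / 2) k * poch ((ρ + 1) / 2) k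
      * ((k.factorial : ℕ) : ℂ) ≠ 0 :=
    mul_ne_zero (mul_ne_zero (mul_ne_zero (mul_ne_zero q5 p1) p2) p3) q6
  rw [RR, RR, poch_succ, poch_succ, poch_succ, Nat.factorial_succ,
    mul_div_assoc', ← neg_div, div_eq_div_iff hE hF]
  push_cast
  ring

lemma cc_even : ∀ k : ℕ, cc ρ (2 * k) = RR ρ k := by
  intro k
  induction k with
  | zero => simp [cc, aa, bb, RR, poch_zero]
  | succ k ih =>
    have h1 := cc_rel hρ (2 * k)
    have h2 := dd_rel hρ (2 * k)
    have h3 := ww_rel hρ (2 * k)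
    have hcomb : (((2 * k : ℕ) : ℂ) + 2) * (((2 * k : ℕ) : ℂ) + 1 + ρ) * (((2 * k : ℕ) : ℂ) + 2 * ρ)
        * (((2 * k : ℕ) : ℂ) + ρ) * cc ρ (2 * k + 2) = -4 * cc ρ (2 * k) := by
      linear_combination (((2 * k : ℕ) : ℂ) + 2 * ρ) * (((2 * k : ℕ) : ℂ) + ρ) * h1
        + 2 * (((2 * k : ℕ) : ℂ) + ρ) * h2 + 2 * h3
    rw [ih] at hcomb
    have hD : (((2 * k : ℕ) : ℂ) + 2) * (((2 * k : ℕ) : ℂ) + 1 + ρ) * (((2 * k : ℕ) : ℂ) + 2 * ρ)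
        * (((2 * k : ℕ) : ℂ) + ρ) ≠ 0 := by
      push_cast
      have f1 : (2 * (k : ℂ) + 2) ≠ 0 := by
        intro h; have h' : ((k : ℂ) + 1) = 0 := by linear_combination h / 2
        exact Nat.cast_add_one_ne_zero k h'
      have f2 : (2 * (k : ℂ) + 1 + ρ) ≠ 0 := by
        intro h; exact hρ (2 * k + 1) (by push_cast; linear_combination h)
      have f3 : (2 * (k : ℂ) + 2 * ρ) ≠ 0 := by
        intro h; exact hρ k (by linear_combination h / 2)
      have f4 : (2 * (k : ℂ) + ρ) ≠ 0 := by
        intro h; exact hρ2 k (by linear_combination h / 2)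
      exact mul_ne_zero (mul_ne_zero (mul_ne_zero f1 f2) f3) f4
    have hRR : (((2 * k : ℕ) : ℂ) + 2) * (((2 * k : ℕ) : ℂ) + 1 + ρ) * (((2 * k : ℕ) : ℂ) + 2 * ρ)
        * (((2 * k : ℕ) : ℂ) + ρ) * RR ρ (k + 1) = -4 * RR ρ k := by
      have hs := RR_succ hρ hρ2 hρ3 k
      push_cast
      linear_combination 4 * hs
    have e : 2 * (k + 1) = 2 * k + 2 := by ring
    rw [e]
    exact mul_left_cancel₀ hD (hcomb.trans hRR.symm)

end

theorem stmt15 (ρ : ℂ) (hρ : ∀ k : ℕ, ρ ≠ -(k : ℂ))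
    (hρ2 : ∀ k : ℕ, ρ / 2 ≠ -(k : ℂ)) (hρ3 : ∀ k : ℕ, (ρ + 1) / 2 ≠ -(k : ℂ)) :
    (∀ N : ℕ, Odd N →
      ∑ m ∈ Finset.range (N + 1),
          (-1 : ℂ) ^ m / (poch ρ m * poch ρ (N - m) * m.factorial * (N - m).factorial)
        = 0) ∧
    (∀ k : ℕ,
      ∑ m ∈ Finset.range (2 * k + 1),
          (-1 : ℂ) ^ m /
            (poch ρ m * poch ρ (2 * k - m) * m.factorial * (2 * k - m).factorial)
        = (-1 : ℂ) ^ k /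
            ((4 : ℂ) ^ k * poch ρ k * poch (ρ / 2) k * poch ((ρ + 1) / 2) k *
              k.factorial)) := by
  constructor
  · intro N hN
    set f : ℕ → ℂ := fun m =>
      (-1 : ℂ) ^ m / (poch ρ m * poch ρ (N - m) * m.factorial * (N - m).factorial) with hf
    have hrefl := Finset.sum_range_reflect f (N + 1)
    simp only [Nat.add_sub_cancel] at hrefl
    have hneg : ∀ m ∈ Finset.range (N + 1), f (N - m) = -f m := by
      intro m hm
      have hmn : m ≤ N := Nat.lt_succ_iff.1 (Finset.mem_range.1 hm)
      have e1 : N - (N - m) = m := by omega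
      have hs : (-1 : ℂ) ^ (N - m) = -(-1) ^ m := by
        rcases Nat.even_or_odd m with he | ho
        · have hodd : Odd (N - m) := by
            rw [Nat.odd_iff]; rw [Nat.odd_iff] at hN; rw [Nat.even_iff] at he; omega
          rw [hodd.neg_one_pow, he.neg_one_pow]
        · have hev : Even (N - m) := by
            rw [Nat.even_iff]; rw [Nat.odd_iff] at hN ho; omega
          rw [hev.neg_one_pow, ho.neg_one_pow]; norm_num
      rw [hf]
      simp only [e1, hs]
      rw [neg_div, neg_inj]
      rw [show poch ρ (N - m) * poch ρ m * ((N - m).factorial : ℂ) * (m.factorial : ℂ)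
          = poch ρ m * poch ρ (N - m) * m.factorial * (N - m).factorial from by ring]
    rw [Finset.sum_congr rfl hneg] at hrefl
    rw [Finset.sum_neg_distrib] at hrefl
    linear_combination (-1/2 : ℂ) * hrefl
  · intro k
    have hc : ∑ m ∈ Finset.range (2 * k + 1),
        (-1 : ℂ) ^ m /
          (poch ρ m * poch ρ (2 * k - m) * m.factorial * (2 * k - m).factorial)
        = cc ρ (2 * k) := by
      rw [cc]
      refine Finset.sum_congr rfl fun m hm => ?_
      rw [bb, aa, div_mul_div_comm, mul_one]
      congr 1
      ring
    rw [hc, cc_even hρ hρ2 hρ3 k, RR]
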